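/- arXiv:2108.12827 — 2 statements merged into one kernel-verified Lean document; each statement's English description precedes it below -/
import Mathlib

section
/- Optimal decompositions restrict to optimal decompositions: if (V^(1),…,V^(p)) is an optimal decomposition of β (i.e. ∑_k V^(k) = β, supp(V^(k)) ⊆ N_k, and ∑_k τ_k ‖V^(k)‖₂ = ‖β‖_{G,τ}), then for any subset S ⊆ {1,…,p}, the family (V^(j))_{j∈S} together with zero vectors for j ∉ S is an optimal decomposition of ∑_{j∈S} V^(j); that is, ‖∑_{j∈S} V^(j)‖_{G,τ} = ∑_{j∈S} τ_j ‖V^(j)‖₂. -/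
open Finset

noncomputable def graphNorm {p : ℕ} (N : Fin p → Finset (Fin p)) (τ : Fin p → ℝ)
    (β : EuclideanSpace ℝ (Fin p)) : ℝ :=
  sInf {s : ℝ | ∃ V : Fin p → EuclideanSpace ℝ (Fin p),
    (∑ k, V k) = β ∧ (∀ k, ∀ i, V k i ≠ 0 → i ∈ N k) ∧ s = ∑ k, τ k * ‖V k‖}

theorem graphNorm_optimal_decomposition_restrict {p : ℕ}
    (N : Fin p → Finset (Fin p)) (τ : Fin p → ℝ)
    (hN : ∀ k, k ∈ N k) (hτ : ∀ k, 0 < τ k)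
    (β : EuclideanSpace ℝ (Fin p)) (V : Fin p → EuclideanSpace ℝ (Fin p))
    (hsum : (∑ k, V k) = β)
    (hsupp : ∀ k, ∀ i, V k i ≠ 0 → i ∈ N k)
    (hopt : (∑ k, τ k * ‖V k‖) = graphNorm N τ β)
    (S : Finset (Fin p)) :
    graphNorm N τ (∑ j ∈ S, V j) = ∑ j ∈ S, τ j * ‖V j‖ := by
  classical
  have hbdd : ∀ γ : EuclideanSpace ℝ (Fin p),
      BddBelow {s : ℝ | ∃ W : Fin p → EuclideanSpace ℝ (Fin p),
        (∑ k, W k) = γ ∧ (∀ k, ∀ i, W k i ≠ 0 → i ∈ N k) ∧ s = ∑ k, τ k * ‖W k‖} := by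
    intro γ
    refine ⟨0, ?_⟩
    rintro s ⟨W, -, -, rfl⟩
    exact Finset.sum_nonneg fun k _ => mul_nonneg (hτ k).le (norm_nonneg _)
  -- the restricted decomposition
  have hmemsum : (∑ k, (if k ∈ S then V k else 0)) = ∑ j ∈ S, V j := by
    rw [Finset.sum_ite_mem, Finset.univ_inter]
  have hmemsupp : ∀ k, ∀ i, (if k ∈ S then V k else 0) i ≠ 0 → i ∈ N k := by
    intro k i h
    by_cases hk : k ∈ S
    · simp only [hk, if_true] at h; exact hsupp k i h
    · simp [hk] at h
  have hmemcost : (∑ j ∈ S, τ j * ‖V j‖) = ∑ k, τ k * ‖(if k ∈ S then V k else 0)‖ := by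
    calc ∑ j ∈ S, τ j * ‖V j‖ = ∑ k, if k ∈ S then τ k * ‖V k‖ else 0 := by
          rw [Finset.sum_ite_mem, Finset.univ_inter]
      _ = ∑ k, τ k * ‖(if k ∈ S then V k else 0)‖ :=
          Finset.sum_congr rfl fun k _ => by by_cases hk : k ∈ S <;> simp [hk]
  have hmem : (∑ j ∈ S, τ j * ‖V j‖) ∈ {s : ℝ | ∃ W : Fin p → EuclideanSpace ℝ (Fin p),
      (∑ k, W k) = ∑ j ∈ S, V j ∧ (∀ k, ∀ i, W k i ≠ 0 → i ∈ N k) ∧ s = ∑ k, τ k * ‖W k‖} :=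
    ⟨fun k => if k ∈ S then V k else 0, hmemsum, hmemsupp, hmemcost⟩
  have hub : graphNorm N τ (∑ j ∈ S, V j) ≤ ∑ j ∈ S, τ j * ‖V j‖ := csInf_le (hbdd _) hmem
  have hlb : ∑ j ∈ S, τ j * ‖V j‖ ≤ graphNorm N τ (∑ j ∈ S, V j) := by
    apply le_csInf ⟨_, hmem⟩
    rintro s ⟨W, hWsum, hWsupp, rfl⟩
    by_contra hlt
    push_neg at hlt
    set U : Fin p → EuclideanSpace ℝ (Fin p) := fun k => (if k ∈ S then 0 else V k) + W k with hU
    have hUsum : (∑ k, U k) = β := by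
      rw [hU]
      rw [Finset.sum_add_distrib, hWsum]
      have h1 : (∑ k, (if k ∈ S then (0 : EuclideanSpace ℝ (Fin p)) else V k))
          = ∑ k ∈ Sᶜ, V k := by
        rw [← Finset.univ_inter Sᶜ, ← Finset.sum_ite_mem]
        apply Finset.sum_congr rfl
        intro k _
        simp [Finset.mem_compl]
      rw [h1, ← hsum, ← Finset.sum_add_sum_compl S V]
      abel
    have hUsupp : ∀ k, ∀ i, U k i ≠ 0 → i ∈ N k := by
      intro k i h
      by_cases hk : k ∈ S
      · simp only [hU, hk, if_true, PiLp.add_apply, PiLp.zero_apply, zero_add] at h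
        exact hWsupp k i h
      · simp only [hU, hk, if_false, PiLp.add_apply] at h
        by_cases hv : V k i = 0
        · refine hWsupp k i fun hw => h ?_
          rw [hv, hw, add_zero]
        · exact hsupp k i hv
    have key : graphNorm N τ β ≤ ∑ k, τ k * ‖U k‖ :=
      csInf_le (hbdd β) ⟨U, hUsum, hUsupp, rfl⟩
    have hcost : (∑ k, τ k * ‖U k‖) ≤ (∑ k, τ k * ‖(if k ∈ S then 0 else V k)‖)
        + ∑ k, τ k * ‖W k‖ := by
      rw [← Finset.sum_add_distrib]
      apply Finset.sum_le_sum
      intro k _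
      rw [← mul_add]
      exact mul_le_mul_of_nonneg_left (norm_add_le _ _) (hτ k).le
    have h2 : (∑ k, τ k * ‖(if k ∈ S then (0 : EuclideanSpace ℝ (Fin p)) else V k)‖)
        = (∑ k, τ k * ‖V k‖) - ∑ j ∈ S, τ j * ‖V j‖ := by
      have h3 : (∑ k, τ k * ‖(if k ∈ S then (0 : EuclideanSpace ℝ (Fin p)) else V k)‖)
          = ∑ k ∈ Sᶜ, τ k * ‖V k‖ := by
        rw [← Finset.univ_inter Sᶜ, ← Finset.sum_ite_mem]
        apply Finset.sum_congr rfl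
        intro k _
        by_cases hk : k ∈ S <;> simp [hk]
      rw [h3, eq_sub_iff_add_eq, add_comm, Finset.sum_add_sum_compl]
    rw [h2] at hcost
    have : graphNorm N τ β < ∑ k, τ k * ‖V k‖ := by
      calc graphNorm N τ β ≤ _ := key
        _ ≤ _ := hcost
        _ < (∑ k, τ k * ‖V k‖) - (∑ j ∈ S, τ j * ‖V j‖) + ∑ j ∈ S, τ j * ‖V j‖ := by
            linarith
        _ = ∑ k, τ k * ‖V k‖ := by ring
    linarith [hopt]
  exact le_antisymm hub hlb
end

section
/- The graph norm equals λ ∑_k τ_k‖β_{I_k}‖₂ (group lasso penalty) when the graph G consists of disjoint complete subgraphs with node sets I_1,…,I_m (each node's closed neighborhood equals its group) and within each group all weights are equal: ‖β‖_{G,τ} = ∑_{k=1}^m τ_{I_k} ‖β_{I_k}‖₂, where β_{I_k} is the restriction of β to I_k. -/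
open Finset

/-- restriction of a vector to a finset of coordinates -/
noncomputable def restr {p : ℕ} (S : Finset (Fin p)) (β : EuclideanSpace ℝ (Fin p)) :
    EuclideanSpace ℝ (Fin p) := WithLp.toLp 2 (fun i => if i ∈ S then β i else 0)

lemma norm_restr {p : ℕ} (S : Finset (Fin p)) (β : EuclideanSpace ℝ (Fin p)) :
    ‖restr S β‖ = Real.sqrt (∑ j ∈ S, (β j) ^ 2) := by
  rw [EuclideanSpace.norm_eq]
  congr 1
  rw [← Finset.sum_subset (Finset.subset_univ S)]
  · refine Finset.sum_congr rfl fun i hi => ?_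
    simp [restr, hi, sq_abs]
  · intro i _ hi
    simp [restr, hi]

theorem graphNorm_group_lasso {p m : ℕ}
    (N : Fin p → Finset (Fin p)) (τ : Fin p → ℝ)
    (I : Fin m → Finset (Fin p)) (g : Fin p → Fin m)
    (τg : Fin m → ℝ) (hτg : ∀ k, 0 < τg k)
    (hmem : ∀ j, j ∈ I (g j))
    (huniq : ∀ j k, j ∈ I k → k = g j)
    (hN : ∀ j, N j = I (g j))
    (hτ : ∀ j, τ j = τg (g j))
    (β : EuclideanSpace ℝ (Fin p)) :
    graphNorm N τ β = ∑ k, τg k * Real.sqrt (∑ j ∈ I k, (β j) ^ 2) := by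
  have hfiber : ∀ k, I k = Finset.univ.filter (fun j => g j = k) := by
    intro k
    ext j
    simp only [Finset.mem_filter, Finset.mem_univ, true_and]
    constructor
    · intro hj; exact (huniq j k hj).symm
    · intro hj; rw [← hj]; exact hmem j
  have hsplit : ∀ F : Fin p → ℝ, ∑ j, F j = ∑ k, ∑ j ∈ I k, F j := by
    intro F
    simp_rw [hfiber]
    rw [Finset.sum_fiberwise_eq_sum_filter]
    simp
  -- the canonical decomposition, attaining the infimum
  set W : Fin p → EuclideanSpace ℝ (Fin p) :=
    fun j => if j = (I (g j)).min' ⟨j, hmem j⟩ then restr (I (g j)) β else 0 with hW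
  have hWsum : (∑ j, W j) = β := by
    ext i
    have hsum : (∑ j, W j) i = ∑ j, W j i := by
      rw [WithLp.ofLp_sum]; exact Finset.sum_apply i Finset.univ _
    rw [hsum]
    set j0 := (I (g i)).min' ⟨i, hmem i⟩ with hj0
    have hj0mem : j0 ∈ I (g i) := Finset.min'_mem _ _
    have hgj0 : g j0 = g i := (huniq j0 (g i) hj0mem).symm
    rw [Finset.sum_eq_single j0]
    · have : j0 = (I (g j0)).min' ⟨j0, hmem j0⟩ := by
        simp_rw [hgj0]; rfl
      simp only [hW, if_pos this, restr, hgj0, if_pos (hmem i)]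
    · intro j _ hne
      simp only [hW]
      split_ifs with h
      · -- j is the min of its group; show its restriction vanishes at i or contradiction
        simp only [restr]
        split_ifs with hi
        · exfalso
          have hgj : g j = g i := huniq i (g j) hi
          apply hne
          rw [hj0]
          conv_lhs => rw [h]
          simp_rw [hgj]
        · rfl
      · rfl
    · intro h; exact absurd (Finset.mem_univ j0) h
  have hWsupp : ∀ k i, W k i ≠ 0 → i ∈ N k := by
    intro k i h
    rw [hN]
    simp only [hW] at h
    split_ifs at h with hk
    · simp only [restr, PiLp.toLp_apply] at h
      split_ifs at h with hi
      · exact hi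
      · exact absurd rfl h
    · exact absurd rfl h
  have hWcost : (∑ j, τ j * ‖W j‖) = ∑ k, τg k * Real.sqrt (∑ j ∈ I k, (β j) ^ 2) := by
    rw [hsplit (fun j => τ j * ‖W j‖)]
    refine Finset.sum_congr rfl fun k _ => ?_
    ·
      rcases (I k).eq_empty_or_nonempty with he | hne
      · simp [he]
      · set jk := (I k).min' hne with hjk
        have hjkmem : jk ∈ I k := Finset.min'_mem _ _
        have hgjk : g jk = k := (huniq jk k hjkmem).symm
        rw [Finset.sum_eq_single jk]
        · have hrep : jk = (I (g jk)).min' ⟨jk, hmem jk⟩ := by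
            simp_rw [hgjk]; rfl
          simp only [hW, if_pos hrep, hτ jk, hgjk, norm_restr]
        · intro j hj hne'
          have hgj : g j = k := (huniq j k hj).symm
          simp only [hW]
          rw [if_neg]
          · simp
          · intro h
            apply hne'
            rw [h]
            simp_rw [hgj]; rfl
        · intro h; exact absurd hjkmem h
  have hmemset : (∑ k, τg k * Real.sqrt (∑ j ∈ I k, (β j) ^ 2)) ∈
      {s : ℝ | ∃ V : Fin p → EuclideanSpace ℝ (Fin p),
        (∑ k, V k) = β ∧ (∀ k, ∀ i, V k i ≠ 0 → i ∈ N k) ∧ s = ∑ k, τ k * ‖V k‖} :=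
    ⟨W, hWsum, hWsupp, hWcost.symm⟩
  have hlb : ∀ s ∈ {s : ℝ | ∃ V : Fin p → EuclideanSpace ℝ (Fin p),
      (∑ k, V k) = β ∧ (∀ k, ∀ i, V k i ≠ 0 → i ∈ N k) ∧ s = ∑ k, τ k * ‖V k‖},
      (∑ k, τg k * Real.sqrt (∑ j ∈ I k, (β j) ^ 2)) ≤ s := by
    rintro s ⟨V, hVsum, hVsupp, rfl⟩
    have key : ∀ k, restr (I k) β = ∑ j ∈ I k, V j := by
      intro k
      ext i
      have hsum : (∑ j ∈ I k, V j) i = ∑ j ∈ I k, V j i :=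
        by rw [WithLp.ofLp_sum]; exact Finset.sum_apply i (I k) _
      rw [hsum]
      simp only [restr]
      split_ifs with hi
      · have : β i = ∑ j, V j i := by
          rw [← hVsum, WithLp.ofLp_sum]; exact Finset.sum_apply i Finset.univ _
        rw [this]
        symm
        apply Finset.sum_subset (Finset.subset_univ (I k))
        intro j _ hj
        by_contra h
        have hiN : i ∈ I (g j) := by rw [← hN]; exact hVsupp j i h
        have : g j = g i := huniq i (g j) hiN
        have hk : g i = k := (huniq i k hi).symm
        apply hj
        rw [← hk, ← this]
        exact hmem j
      · symm
        apply Finset.sum_eq_zero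
        intro j hj
        by_contra h
        have hiN : i ∈ I (g j) := by rw [← hN]; exact hVsupp j i h
        have hgj : g j = k := (huniq j k hj).symm
        rw [hgj] at hiN
        exact hi hiN
    calc (∑ k, τg k * Real.sqrt (∑ j ∈ I k, (β j) ^ 2))
        = ∑ k, τg k * ‖restr (I k) β‖ := by
          refine Finset.sum_congr rfl fun k _ => ?_
          rw [norm_restr]
      _ ≤ ∑ k, ∑ j ∈ I k, τg k * ‖V j‖ := by
          refine Finset.sum_le_sum fun k _ => ?_
          rw [← Finset.mul_sum]
          refine mul_le_mul_of_nonneg_left ?_ (hτg k).le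
          rw [key k]
          exact norm_sum_le _ _
      _ = ∑ j, τ j * ‖V j‖ := by
          rw [hsplit (fun j => τ j * ‖V j‖)]
          refine Finset.sum_congr rfl fun k _ => ?_
          refine Finset.sum_congr rfl fun j hj => ?_
          rw [hτ j, (huniq j k hj).symm]
  exact le_antisymm (csInf_le ⟨_, hlb⟩ hmemset) (le_csInf ⟨_, hmemset⟩ hlb)
end
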